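/- Edge-split-attach preserves bispanning: if G = (V,E) is bispanning, ē ∈ E an edge with ends {x,y}, z ∈ V any vertex and v ∉ V a new vertex, then the graph obtained by deleting ē and adding v with edges {x,v}, {y,v}, {z,v} is bispanning. -/

import Mathlib

namespace MG

variable {V E : Type*}

/-- Two vertices are joined by an edge of `F`. -/
def Adj (ends : E → Sym2 V) (F : Set E) (u v : V) : Prop :=
  ∃ e ∈ F, ends e = s(u, v)

/-- Reachability using edges of `F`. -/
def Reach (ends : E → Sym2 V) (F : Set E) : V → V → Prop :=
  Relation.ReflTransGen (Adj ends F)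

/-- The edge set `F` connects all vertices of the multigraph. -/
def Conn (ends : E → Sym2 V) (F : Set E) : Prop :=
  ∀ u v : V, Reach ends F u v

/-- `F` is a spanning tree: it connects all vertices using exactly `|V| - 1` edges. -/
def IsSpanningTree (ends : E → Sym2 V) (F : Set E) : Prop :=
  Conn ends F ∧ Nat.card F = Nat.card V - 1

/-- The multigraph is bispanning: its edge set is the disjoint union of two spanning trees. -/
def Bispanning (ends : E → Sym2 V) : Prop :=
  ∃ S T : Set E, S ∪ T = Set.univ ∧ Disjoint S T ∧
    IsSpanningTree ends S ∧ IsSpanningTree ends T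

/-- Degree of a vertex: number of incident edges. -/
noncomputable def deg (ends : E → Sym2 V) (v : V) : ℕ :=
  Nat.card {e : E | v ∈ ends e}

/-- `C` is (the edge set of) a simple cycle: nonempty, connected, and every
incident vertex is incident to exactly two edges of `C`. -/
def IsCycle (ends : E → Sym2 V) (C : Set E) : Prop :=
  C.Nonempty ∧
  (∀ u v : V, (∃ e ∈ C, u ∈ ends e) → (∃ e ∈ C, v ∈ ends e) → Reach ends C u v) ∧
  (∀ v : V, (∃ e ∈ C, v ∈ ends e) → Nat.card {e : E | e ∈ C ∧ v ∈ ends e} = 2)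

/-- Number of connected components when only edges of `F` are used. -/
noncomputable def numComp (ends : E → Sym2 V) (F : Set E) : ℕ :=
  Nat.card (Quot (Reach ends F))

/-- `D` is an edge cut: removing it increases the number of components. -/
def IsEdgeCut (ends : E → Sym2 V) (D : Set E) : Prop :=
  numComp ends Set.univ < numComp ends Dᶜ

/-- A minimal edge cut: no proper subset is an edge cut. -/
def IsMinEdgeCut (ends : E → Sym2 V) (D : Set E) : Prop :=
  IsEdgeCut ends D ∧ ∀ D' : Set E, D' ⊂ D → ¬ IsEdgeCut ends D'

/-- `D` is the fundamental cut of the tree edge `e` of the spanning tree `F`: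
the minimal edge cut contained in `(E \ F) + e`, which contains `e`. -/
def IsFundCut (ends : E → Sym2 V) (F : Set E) (e : E) (D : Set E) : Prop :=
  D ⊆ insert e Fᶜ ∧ e ∈ D ∧ IsMinEdgeCut ends D

/-- `C` is the fundamental cycle of the non-tree edge `e` w.r.t. the spanning tree `F`:
the cycle contained in `F + e`, which contains `e`. -/
def IsFundCycle (ends : E → Sym2 V) (F : Set E) (e : E) (C : Set E) : Prop :=
  C ⊆ insert e F ∧ e ∈ C ∧ IsCycle ends C

end MG

/-!
Split the bispanning graph into complementary spanning trees `S ∋ ē` and `Sᶜ`. In `S`, replace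
`ē` by the path `x – v – y` through the new vertex `v = none`: this keeps `S` connected and, with
one edge more and one vertex more, of the right size. Extend `Sᶜ` by the pendant edge `z – v`.
The two new trees are again complementary.
-/

theorem Set.ncard_inl_image_union_inr_image {α β : Type*} [Finite α] [Finite β]
    (A : Set α) (B : Set β) :
    (Sum.inl '' A ∪ Sum.inr '' B : Set (α ⊕ β)).ncard = A.ncard + B.ncard := by
  rw [Set.ncard_union_eq Set.disjoint_image_inl_image_inr,
    Set.ncard_image_of_injective _ Sum.inl_injective,
    Set.ncard_image_of_injective _ Sum.inr_injective]

theorem Set.ncard_preimage_val_ne {α : Type*} (A : Set α) (a : α) :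
    (Subtype.val ⁻¹' A : Set {b // b ≠ a}).ncard = (A \ {a}).ncard := by
  rw [← Set.ncard_preimage_of_injective_subset_range (s := A \ {a}) Subtype.val_injective
    (fun b hb => ⟨⟨b, hb.2⟩, rfl⟩)]
  congr 1
  ext ⟨b, hb⟩
  exact ⟨fun h => ⟨h, hb⟩, And.left⟩

namespace MG

variable {V E : Type*}

theorem Adj.symm {ends : E → Sym2 V} {F : Set E} {u v : V} (h : Adj ends F u v) :
    Adj ends F v u := by
  obtain ⟨e, he, hends⟩ := h
  exact ⟨e, he, hends.trans Sym2.eq_swap⟩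

theorem Reach.symm {ends : E → Sym2 V} {F : Set E} {u v : V} (h : Reach ends F u v) :
    Reach ends F v u :=
  Relation.reflTransGen_swap.mp (Relation.ReflTransGen.mono (fun _ _ => Adj.symm) _ _ h)

theorem bispanning_iff_exists_compl {ends : E → Sym2 V} :
    Bispanning ends ↔ ∃ S : Set E, IsSpanningTree ends S ∧ IsSpanningTree ends Sᶜ := by
  constructor
  · rintro ⟨S, T, hunion, hdisj, hS, hT⟩
    rw [← (IsCompl.of_eq hdisj.eq_bot hunion).compl_eq] at hT
    exact ⟨S, hS, hT⟩
  · rintro ⟨S, hS, hSc⟩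
    exact ⟨S, Sᶜ, Set.union_compl_self S, disjoint_compl_right, hS, hSc⟩

theorem conn_option {ends : E → Sym2 (Option V)} {F : Set E}
    (hsome : ∀ u w : V, Reach ends F (some u) (some w)) {a : V} (ha : Adj ends F (some a) none) :
    Conn ends F := by
  have hnone (u : V) : Reach ends F (some u) none := Relation.ReflTransGen.tail (hsome u a) ha
  rintro (_ | u) (_ | w)
  · exact .refl
  · exact (hnone w).symm
  · exact hnone u
  · exact hsome u w

def splitAttach (ends : E → Sym2 V) (ebar : E) (x y z : V) :
    {e : E // e ≠ ebar} ⊕ Fin 3 → Sym2 (Option V) :=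
  Sum.elim (fun e => (ends e.val).map some)
    (fun i => if i = 0 then s(some x, (none : Option V))
      else if i = 1 then s(some y, none) else s(some z, none))

def splitAttachEdges (ebar : E) (F : Set E) (B : Set (Fin 3)) :
    Set ({e : E // e ≠ ebar} ⊕ Fin 3) :=
  Sum.inl '' (Subtype.val ⁻¹' F) ∪ Sum.inr '' B

section SplitAttach

variable {ends : E → Sym2 V} {ebar : E} {x y : V}

@[simp]
theorem inl_mem_splitAttachEdges {F : Set E} {B : Set (Fin 3)} {e : {e : E // e ≠ ebar}} :
    Sum.inl e ∈ splitAttachEdges ebar F B ↔ e.val ∈ F := by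
  simp [splitAttachEdges]

@[simp]
theorem inr_mem_splitAttachEdges {F : Set E} {B : Set (Fin 3)} {i : Fin 3} :
    Sum.inr i ∈ splitAttachEdges ebar F B ↔ i ∈ B := by
  simp [splitAttachEdges]

theorem splitAttachEdges_compl (F : Set E) (B : Set (Fin 3)) :
    (splitAttachEdges ebar F B)ᶜ = splitAttachEdges ebar Fᶜ Bᶜ := by
  rw [splitAttachEdges, ← Set.inl_compl_union_inr_compl, splitAttachEdges, Set.preimage_compl]

theorem ncard_splitAttachEdges [Finite E] (F : Set E) (B : Set (Fin 3)) :
    (splitAttachEdges ebar F B).ncard = (F \ {ebar}).ncard + B.ncard := by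
  rw [splitAttachEdges, Set.ncard_inl_image_union_inr_image, Set.ncard_preimage_val_ne]

theorem reach_splitAttach_some (z : V) {F : Set E} {B : Set (Fin 3)}
    (hbar : ∀ u w : V, ebar ∈ F → ends ebar = s(u, w) →
      Reach (splitAttach ends ebar x y z) (splitAttachEdges ebar F B) (some u) (some w))
    {u w : V} (h : Reach ends F u w) :
    Reach (splitAttach ends ebar x y z) (splitAttachEdges ebar F B) (some u) (some w) := by
  refine Relation.ReflTransGen.lift' some ?_ _ _ h
  rintro u w ⟨e, heF, he⟩
  by_cases hne : e = ebar
  · subst hne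
    exact hbar u w heF he
  · exact .single ⟨.inl ⟨e, hne⟩, by simpa using heF, by simp [splitAttach, he]⟩

theorem isSpanningTree_splitAttach_of_mem [Finite V] [Finite E] (z : V)
    (hends : ends ebar = s(x, y)) {S : Set E} (hS : IsSpanningTree ends S) (hmem : ebar ∈ S) :
    IsSpanningTree (splitAttach ends ebar x y z) (splitAttachEdges ebar S {0, 1}) := by
  have hx : Adj (splitAttach ends ebar x y z) (splitAttachEdges ebar S {0, 1}) (some x) none :=
    ⟨.inr 0, by simp, rfl⟩
  have hy : Adj (splitAttach ends ebar x y z) (splitAttachEdges ebar S {0, 1}) (some y) none :=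
    ⟨.inr 1, by simp, rfl⟩
  have hxy : Reach (splitAttach ends ebar x y z) (splitAttachEdges ebar S {0, 1})
      (some x) (some y) :=
    Relation.ReflTransGen.tail (.single hx) hy.symm
  have hbar (u w : V) (_ : ebar ∈ S) (he : ends ebar = s(u, w)) :
      Reach (splitAttach ends ebar x y z) (splitAttachEdges ebar S {0, 1}) (some u) (some w) := by
    rcases Sym2.eq_iff.mp (hends.symm.trans he) with ⟨rfl, rfl⟩ | ⟨rfl, rfl⟩
    exacts [hxy, hxy.symm]
  refine ⟨conn_option (fun u w => reach_splitAttach_some z hbar (hS.1 u w)) hx, ?_⟩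
  have hpos : 0 < S.ncard := (Set.ncard_pos).mpr ⟨ebar, hmem⟩
  have hcard := hS.2
  rw [Nat.card_coe_set_eq] at hcard ⊢
  rw [ncard_splitAttachEdges, Set.ncard_sdiff_singleton_of_mem hmem,
    Set.ncard_pair (by decide), Finite.card_option]
  omega

theorem isSpanningTree_splitAttach_of_notMem [Finite V] [Finite E] (z : V) {T : Set E}
    (hT : IsSpanningTree ends T) (hnot : ebar ∉ T) :
    IsSpanningTree (splitAttach ends ebar x y z) (splitAttachEdges ebar T {2}) := by
  have hz : Adj (splitAttach ends ebar x y z) (splitAttachEdges ebar T {2}) (some z) none :=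
    ⟨.inr 2, by simp, rfl⟩
  have hbar (u w : V) (h : ebar ∈ T) (_ : ends ebar = s(u, w)) :
      Reach (splitAttach ends ebar x y z) (splitAttachEdges ebar T {2}) (some u) (some w) :=
    absurd h hnot
  refine ⟨conn_option (fun u w => reach_splitAttach_some z hbar (hT.1 u w)) hz, ?_⟩
  have hpos : 0 < Nat.card V := Nat.card_pos_iff.mpr ⟨⟨z⟩, inferInstance⟩
  have hcard := hT.2
  rw [Nat.card_coe_set_eq] at hcard ⊢
  rw [ncard_splitAttachEdges, Set.sdiff_singleton_eq_self hnot, Set.ncard_singleton,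
    Finite.card_option]
  omega

end SplitAttach

end MG

theorem edge_split_attach_bispanning_general {V E : Type*} [Finite V] [Finite E]
    (ends : E → Sym2 V)
    (h : MG.Bispanning ends) (ebar : E) (x y : V) (hends : ends ebar = s(x, y)) (z : V) :
    MG.Bispanning (V := Option V) (E := {e : E // e ≠ ebar} ⊕ Fin 3)
      (Sum.elim (fun e => (ends e.val).map some)
        (fun i => if i = 0 then s(some x, (none : Option V))
          else if i = 1 then s(some y, none) else s(some z, none))) := by
  show MG.Bispanning (MG.splitAttach ends ebar x y z)
  obtain ⟨S, hS, hSc, hmem⟩ :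
      ∃ S, MG.IsSpanningTree ends S ∧ MG.IsSpanningTree ends Sᶜ ∧ ebar ∈ S := by
    obtain ⟨S, hS, hSc⟩ := MG.bispanning_iff_exists_compl.mp h
    by_cases hmem : ebar ∈ S
    · exact ⟨S, hS, hSc, hmem⟩
    · exact ⟨Sᶜ, hSc, by rwa [compl_compl], hmem⟩
  refine MG.bispanning_iff_exists_compl.mpr ⟨MG.splitAttachEdges ebar S {0, 1},
    MG.isSpanningTree_splitAttach_of_mem z hends hS hmem, ?_⟩
  have hB : ({0, 1} : Set (Fin 3))ᶜ = {2} := by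
    ext i
    fin_cases i <;> simp
  rw [MG.splitAttachEdges_compl, hB]
  exact MG.isSpanningTree_splitAttach_of_notMem z hSc (· hmem)

/-- Edge-split-attach preserves bispanning: deleting an edge `ē` with ends `{x,y}` and
adding a new vertex joined to `x`, `y` and `z` yields a bispanning graph. -/
theorem edge_split_attach_bispanning {V E : Type*} [Finite V] [Finite E] [DecidableEq E]
    (ends : E → Sym2 V) (hloop : ∀ e : E, ¬ (ends e).IsDiag)
    (h : MG.Bispanning ends) (ebar : E) (x y : V) (hends : ends ebar = s(x, y)) (z : V) :
    MG.Bispanning (V := Option V) (E := {e : E // e ≠ ebar} ⊕ Fin 3)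
      (Sum.elim (fun e => (ends e.val).map some)
        (fun i => if i = 0 then s(some x, (none : Option V))
          else if i = 1 then s(some y, none) else s(some z, none))) :=
  edge_split_attach_bispanning_general ends h ebar x y hends z
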